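/- arXiv:math/0003083 — 4 statements merged into one kernel-verified Lean document; each statement's English description precedes it below -/
import Mathlib

section
/- Let g+1 ≤ r ≤ q ≤ k with r−1 ∈ Lbar and [r,q−1] ⊆ L(1), let Ψ ∈ 𝔛nb[g,r−1], and let Ξ ∈ 𝔛[r,q] with e_{Ξ,j} = 1 for all j in [r,q]. Then θ_{Ψ∪Ξ} = θ_Ψ · R_{[r,q−1]} · X_q. -/
namespace CP

/-- `X_j := (λ'_j − j) − (λ'_{k+1} − (k+1))`. -/
def X (k : ℤ) (lam : ℤ → ℤ) (j : ℤ) : ℤ := (lam j - j) - (lam (k + 1) - (k + 1))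

/-- Decidable membership predicate for the set of `i`-steps `L(i)`. -/
def memL (g k : ℤ) (lam : ℤ → ℤ) (i : ℤ) (j : ℤ) : Prop :=
  g + 1 ≤ j ∧ j ≤ k - 1 ∧ lam (j + 1) = lam j - i

instance (g k : ℤ) (lam : ℤ → ℤ) (i j : ℤ) : Decidable (memL g k lam i j) := by
  unfold memL; infer_instance

/-- The set of `i`-steps `L(i) = { j ∈ [g+1,k−1] | λ'_{j+1} = λ'_j − i }`. -/
def L (g k : ℤ) (lam : ℤ → ℤ) (i : ℤ) : Set ℤ := {j : ℤ | memL g k lam i j}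

/-- `Lbar = [g,k] ∖ (L(0) ∪ L(1))`. -/
def Lbar (g k : ℤ) (lam : ℤ → ℤ) : Set ℤ :=
  Set.Icc g k \ (L g k lam 0 ∪ L g k lam 1)

/-- Falling factorial `x^(m) = x(x−1)⋯(x−m+1)`. -/
def ff (x : ℤ) (m : ℕ) : ℤ := ∏ i ∈ Finset.range m, (x - (i : ℤ))

/-- The set `𝔛[p,q]` of partial patterns on `[p,q]`: subsets of `{1,2}×[p,q]`
containing `{1,2}×({g,k+1} ∩ [p,q])`; for `p > q` it is `{∅}`. -/
def Patt (g k p q : ℤ) : Set (Finset (ℤ × ℤ)) :=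
  if p ≤ q then
    {Xi | Xi ⊆ ({1, 2} : Finset ℤ) ×ˢ Finset.Icc p q ∧
      (({1, 2} : Finset ℤ) ×ˢ (({g, k + 1} : Finset ℤ) ∩ Finset.Icc p q)) ⊆ Xi}
  else {∅}

/-- The `r`-th column `Ξ_r = { i ∈ {1,2} | (i,r) ∈ Ξ }` of a partial pattern. -/
def col (Xi : Finset (ℤ × ℤ)) (r : ℤ) : Finset ℤ :=
  ({1, 2} : Finset ℤ).filter (fun i => (i, r) ∈ Xi)

/-- The weight factor at an index `r ∈ L(0)`, in terms of the columns `c = Ξ_r`, `d = Ξ_{r+1}`. -/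
def wL0 (x : ℤ) (c d : Finset ℤ) : ℤ :=
  if c = ({1, 2} : Finset ℤ) ∧ d = ({1, 2} : Finset ℤ) then x * (x + 1)
  else if (c = {1} ∨ c = {2}) ∧ d = ({1, 2} : Finset ℤ) then x + 1
  else if (c = ({1} : Finset ℤ) ∧ d = {1}) ∨ (c = ({2} : Finset ℤ) ∧ d = {2}) then
    (x - 1) * (x + 1)
  else if c = ∅ ∧ d = ({1, 2} : Finset ℤ) then 2
  else if c = ∅ ∧ (d = ({1} : Finset ℤ) ∨ d = {2}) then x - 1
  else if c = ∅ ∧ d = ∅ then (x - 1) * x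
  else 0

/-- The weight factor at an index `r ∈ L(1)`. -/
def wL1 (x : ℤ) (c d : Finset ℤ) : ℤ :=
  if c = ({1, 2} : Finset ℤ) ∧ d = ({1, 2} : Finset ℤ) then -(x * (x - 3))
  else if c = ({1, 2} : Finset ℤ) ∧ (d = ({1} : Finset ℤ) ∨ d = {2}) then x * (x - 2)
  else if c = ({1, 2} : Finset ℤ) ∧ d = ∅ then 0
  else if d = ({1, 2} : Finset ℤ) then 2
  else if d = ({1} : Finset ℤ) ∨ d = {2} then x - 2
  else (x - 2) * (x - 1)

/-- The weight factor of the recursion defining `θ`, at index `r`, with columns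
`c = Ξ_r` and `d = Ξ_{r+1}`. -/
def w (g k : ℤ) (lam : ℤ → ℤ) (r : ℤ) (c d : Finset ℤ) : ℤ :=
  if memL g k lam 0 r then wL0 (X k lam r) c d
  else if memL g k lam 1 r then wL1 (X k lam r) c d
  else (Nat.factorial d.card : ℤ) * ff (X k lam (r + 1)) (2 - d.card)

/-- `θ_Ξ` for `Ξ ∈ 𝔛[g,r]`: the recursion `θ_{{1,2}×{g}} = 1`, `θ_{Ξ'} = w·θ_Ξ`
unfolds to the product of the local weight factors. -/
noncomputable def theta (g k : ℤ) (lam : ℤ → ℤ) (r : ℤ) (Xi : Finset (ℤ × ℤ)) : ℤ :=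
  ∏ j ∈ Finset.Icc g (r - 1), w g k lam j (col Xi j) (col Xi (j + 1))

/-- `R_{[r,s]} = (∏_{j ∈ L(0)∩[r,s]} X_j(X_j−1)) · (∏_{j ∈ L(1)∩[r,s]} X_j)`. -/
noncomputable def Rfac (g k : ℤ) (lam : ℤ → ℤ) (r s : ℤ) : ℤ :=
  (∏ j ∈ (Finset.Icc r s).filter (fun j => memL g k lam 0 j), X k lam j * (X k lam j - 1)) *
  (∏ j ∈ (Finset.Icc r s).filter (fun j => memL g k lam 1 j), X k lam j)

/-- `Ξ ∈ 𝔛[p,q]` is bulky if some `u ∈ [p,q−1] ∩ L(0)` has `(Ξ_u, Ξ_{u+1})` among the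
seven listed pairs, or some `u ∈ [p,q−1] ∩ L(1)` has `(Ξ_u, Ξ_{u+1}) = ({1,2},∅)`. -/
def Bulky (g k : ℤ) (lam : ℤ → ℤ) (p q : ℤ) (Xi : Finset (ℤ × ℤ)) : Prop :=
  (∃ u, p ≤ u ∧ u ≤ q - 1 ∧ u ∈ L g k lam 0 ∧
    ((col Xi u = ({1, 2} : Finset ℤ) ∧ col Xi (u + 1) = {2}) ∨
     (col Xi u = ({1, 2} : Finset ℤ) ∧ col Xi (u + 1) = {1}) ∨
     (col Xi u = ({1} : Finset ℤ) ∧ col Xi (u + 1) = {2}) ∨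
     (col Xi u = ({2} : Finset ℤ) ∧ col Xi (u + 1) = {1}) ∨
     (col Xi u = ({1} : Finset ℤ) ∧ col Xi (u + 1) = ∅) ∨
     (col Xi u = ({2} : Finset ℤ) ∧ col Xi (u + 1) = ∅) ∨
     (col Xi u = ({1, 2} : Finset ℤ) ∧ col Xi (u + 1) = ∅))) ∨
  (∃ u, p ≤ u ∧ u ≤ q - 1 ∧ u ∈ L g k lam 1 ∧
    col Xi u = ({1, 2} : Finset ℤ) ∧ col Xi (u + 1) = ∅)

end CP


open CP in
private lemma prod_Icc_split (f : ℤ → ℤ) (a b c : ℤ) (h1 : a ≤ b + 1) (h2 : b ≤ c) :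
    ∏ j ∈ Finset.Icc a c, f j =
      (∏ j ∈ Finset.Icc a b, f j) * ∏ j ∈ Finset.Icc (b + 1) c, f j := by
  rw [← Finset.prod_union]
  · congr 1
    ext x
    simp only [Finset.mem_union, Finset.mem_Icc]
    omega
  · rw [Finset.disjoint_left]
    intro x hx hx'
    simp only [Finset.mem_Icc] at hx hx'
    omega

open CP in
private lemma col_subset (Xi : Finset (ℤ × ℤ)) (j : ℤ) : col Xi j ⊆ ({1, 2} : Finset ℤ) :=
  Finset.filter_subset _ _

open CP in
private lemma col_singleton {Xi : Finset (ℤ × ℤ)} {j : ℤ} (h : (col Xi j).card = 1) :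
    col Xi j = {1} ∨ col Xi j = {2} := by
  obtain ⟨a, ha⟩ := Finset.card_eq_one.mp h
  have haa : a ∈ col Xi j := ha ▸ Finset.mem_singleton_self a
  have := col_subset Xi j haa
  simp only [Finset.mem_insert, Finset.mem_singleton] at this
  rcases this with h1 | h2
  · exact Or.inl (by rw [ha, h1])
  · exact Or.inr (by rw [ha, h2])


open CP
theorem stmt3 (g k : ℤ) (lam : ℤ → ℤ) (hgk : g < k)
    (hdec : ∀ j : ℤ, g ≤ j → j ≤ k → lam (j + 1) ≤ lam j)
    (r q : ℤ) (hr : g + 1 ≤ r) (hrq : r ≤ q) (hqk : q ≤ k)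
    (hrLbar : (r - 1) ∈ Lbar g k lam)
    (hL1 : ∀ j : ℤ, r ≤ j → j ≤ q - 1 → j ∈ L g k lam 1)
    (Psi Xi : Finset (ℤ × ℤ))
    (hPsi : Psi ∈ Patt g k g (r - 1)) (hPsinb : ¬ Bulky g k lam g (r - 1) Psi)
    (hXi : Xi ∈ Patt g k r q)
    (hwt : ∀ j : ℤ, r ≤ j → j ≤ q → (col Xi j).card = 1) :
    theta g k lam q (Psi ∪ Xi) =
      theta g k lam (r - 1) Psi * Rfac g k lam r (q - 1) * X k lam q := by
  classical
  -- basic membership facts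
  have hgr : g ≤ r - 1 := by linarith
  have hPsi' : Psi ⊆ ({1, 2} : Finset ℤ) ×ˢ Finset.Icc g (r - 1) := by
    simp only [Patt, if_pos hgr, Set.mem_setOf_eq] at hPsi
    exact hPsi.1
  have hXi' : Xi ⊆ ({1, 2} : Finset ℤ) ×ˢ Finset.Icc r q := by
    simp only [Patt, if_pos hrq, Set.mem_setOf_eq] at hXi
    exact hXi.1
  have hcolPsi : ∀ j : ℤ, j ≤ r - 1 → col (Psi ∪ Xi) j = col Psi j := by
    intro j hj
    unfold col
    apply Finset.filter_congr
    intro i _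
    simp only [Finset.mem_union]
    constructor
    · rintro (h | h)
      · exact h
      · exfalso
        have := hXi' h
        simp only [Finset.mem_product, Finset.mem_Icc] at this
        omega
    · exact Or.inl
  have hcolXi : ∀ j : ℤ, r ≤ j → col (Psi ∪ Xi) j = col Xi j := by
    intro j hj
    unfold col
    apply Finset.filter_congr
    intro i _
    simp only [Finset.mem_union]
    constructor
    · rintro (h | h)
      · exfalso
        have := hPsi' h
        simp only [Finset.mem_product, Finset.mem_Icc] at this
        omega
      · exact h
    · exact Or.inr
  -- r-1 not in L(0) or L(1)
  have hrL : ¬ memL g k lam 0 (r - 1) ∧ ¬ memL g k lam 1 (r - 1) := by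
    have := hrLbar.2
    simp only [L, Set.mem_union, Set.mem_setOf_eq] at this
    push_neg at this
    exact this
  -- each j in [r, q-1] is in L(1) and not in L(0)
  have hL1' : ∀ j : ℤ, r ≤ j → j ≤ q - 1 → memL g k lam 1 j ∧ ¬ memL g k lam 0 j := by
    intro j h1 h2
    have hm := hL1 j h1 h2
    simp only [L, Set.mem_setOf_eq] at hm
    refine ⟨hm, ?_⟩
    intro hm0
    have := hm.2.2
    have := hm0.2.2
    omega
  -- weight at step r-1
  have hwr : w g k lam (r - 1) (col (Psi ∪ Xi) (r - 1)) (col (Psi ∪ Xi) r) = X k lam r := by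
    rw [w, if_neg hrL.1, if_neg hrL.2]
    have hc : (col (Psi ∪ Xi) r).card = 1 := by
      rw [hcolXi r le_rfl]; exact hwt r le_rfl hrq
    rw [hc]
    have : r - 1 + 1 = r := by ring
    rw [this]
    simp [ff]
  -- weight at L(1) steps
  have hwL1 : ∀ j : ℤ, r ≤ j → j ≤ q - 1 →
      w g k lam j (col (Psi ∪ Xi) j) (col (Psi ∪ Xi) (j + 1)) = X k lam j - 2 := by
    intro j h1 h2
    obtain ⟨hm1, hm0⟩ := hL1' j h1 h2
    rw [w, if_neg hm0, if_pos hm1]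
    have hcj : (col (Psi ∪ Xi) j).card = 1 := by
      rw [hcolXi j h1]; exact hwt j h1 (by omega)
    have hcj1 : (col (Psi ∪ Xi) (j + 1)).card = 1 := by
      rw [hcolXi (j + 1) (by omega)]; exact hwt (j + 1) (by omega) (by omega)
    have hne12 : ∀ s : Finset ℤ, s.card = 1 → s ≠ ({1, 2} : Finset ℤ) := by
      intro s hs h
      rw [h] at hs
      simp at hs
    have hc12 := hne12 _ hcj
    have hd12 := hne12 _ hcj1
    have hd := col_singleton hcj1
    rw [wL1, if_neg (by tauto), if_neg (by tauto), if_neg (by tauto),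
      if_neg (by tauto), if_pos hd]
  -- X recursion on L(1)
  have hXrec : ∀ j : ℤ, r ≤ j → j ≤ q - 1 → X k lam j - 2 = X k lam (j + 1) := by
    intro j h1 h2
    have hm := (hL1' j h1 h2).1
    have := hm.2.2
    unfold X
    omega
  -- split theta of the union
  unfold theta
  rw [prod_Icc_split _ g (r - 2) (q - 1) (by omega) (by omega)]
  have hr2 : r - 2 + 1 = r - 1 := by ring
  rw [hr2]
  rw [prod_Icc_split _ (r - 1) (r - 1) (q - 1) (by omega) (by omega)]
  have hr1 : r - 1 + 1 = r := by ring
  rw [hr1]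
  have hfirst : (∏ j ∈ Finset.Icc g (r - 2), w g k lam j (col (Psi ∪ Xi) j) (col (Psi ∪ Xi) (j + 1)))
      = ∏ j ∈ Finset.Icc g (r - 1 - 1), w g k lam j (col Psi j) (col Psi (j + 1)) := by
    have : r - 1 - 1 = r - 2 := by ring
    rw [this]
    apply Finset.prod_congr rfl
    intro j hj
    simp only [Finset.mem_Icc] at hj
    rw [hcolPsi j (by omega), hcolPsi (j + 1) (by omega)]
  rw [hfirst, Finset.Icc_self, Finset.prod_singleton]
  rw [show r - 1 + 1 = r from by ring, hwr]
  have hsecond : (∏ j ∈ Finset.Icc r (q - 1), w g k lam j (col (Psi ∪ Xi) j) (col (Psi ∪ Xi) (j + 1)))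
      = ∏ j ∈ Finset.Icc r (q - 1), X k lam (j + 1) := by
    apply Finset.prod_congr rfl
    intro j hj
    simp only [Finset.mem_Icc] at hj
    rw [hwL1 j hj.1 hj.2, hXrec j hj.1 hj.2]
  rw [hsecond]
  -- compute Rfac
  have hfilt0 : (Finset.Icc r (q - 1)).filter (fun j => memL g k lam 0 j) = ∅ := by
    rw [Finset.filter_eq_empty_iff]
    intro j hj
    simp only [Finset.mem_Icc] at hj
    exact (hL1' j hj.1 hj.2).2
  have hfilt1 : (Finset.Icc r (q - 1)).filter (fun j => memL g k lam 1 j) = Finset.Icc r (q - 1) := by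
    rw [Finset.filter_true_of_mem]
    intro j hj
    simp only [Finset.mem_Icc] at hj
    exact (hL1' j hj.1 hj.2).1
  rw [Rfac, hfilt0, hfilt1, Finset.prod_empty, one_mul]
  -- shift the product
  have hshift : (∏ j ∈ Finset.Icc r (q - 1), X k lam (j + 1))
      = ∏ j ∈ Finset.Icc (r + 1) q, X k lam j := by
    have hmap : Finset.Icc (r + 1) q = Finset.map (addRightEmbedding 1) (Finset.Icc r (q - 1)) := by
      rw [Finset.map_add_right_Icc]
      congr 1
      ring
    rw [hmap, Finset.prod_map]
    rfl
  rw [hshift]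
  -- final algebra: X r * ∏_{[r+1,q]} X = ∏_{[r,q-1]} X * X q
  have h1 : ∏ j ∈ Finset.Icc r q, X k lam j
      = X k lam r * ∏ j ∈ Finset.Icc (r + 1) q, X k lam j := by
    rw [prod_Icc_split _ r r q (by omega) hrq, Finset.Icc_self, Finset.prod_singleton]
  have h2 : ∏ j ∈ Finset.Icc r q, X k lam j
      = (∏ j ∈ Finset.Icc r (q - 1), X k lam j) * X k lam q := by
    rw [prod_Icc_split _ r (q - 1) q (by omega) (by omega)]
    have : q - 1 + 1 = q := by ring
    rw [this, Finset.Icc_self, Finset.prod_singleton]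
  have := h1.symm.trans h2
  rw [this]
  ring
end

section
/- Let g+1 ≤ r ≤ q ≤ k with r−1 ∈ Lbar and [r,q−1] ⊆ L(1), let Ψ ∈ 𝔛nb[g,r−1], and let Ξ ∈ 𝔛nb[r,q] with e_{Ξ,j} = 1 for all j in [r,q−1] and e_{Ξ,q} = 2. Then θ_{Ψ∪Ξ} = 2 · θ_Ψ · R_{[r,q−1]}. -/
open CP

lemma ne12_1 : ({1}:Finset ℤ) ≠ {1,2} := by decide
lemma ne12_2 : ({2}:Finset ℤ) ≠ {1,2} := by decide
lemma ne12_1' : ({1,2}:Finset ℤ) ≠ {1} := by decide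

lemma wL1_ss (x : ℤ) {c d : Finset ℤ} (hc : c = {1} ∨ c = {2}) (hd : d = {1} ∨ d = {2}) :
    wL1 x c d = x - 2 := by
  rcases hc with hc|hc <;> rcases hd with hd|hd <;> subst hc <;> subst hd <;>
    simp [wL1, ne12_1, ne12_2]

lemma wL1_s2 (x : ℤ) {c d : Finset ℤ} (hc : c = {1} ∨ c = {2}) (hd : d = ({1,2}:Finset ℤ)) :
    wL1 x c d = 2 := by
  rcases hc with hc|hc <;> subst hc <;> subst hd <;> simp [wL1, ne12_1, ne12_2, ne12_1']

lemma col_cases (Xi : Finset (ℤ×ℤ)) (j : ℤ) :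
    col Xi j = ∅ ∨ col Xi j = {1} ∨ col Xi j = {2} ∨ col Xi j = ({1,2} : Finset ℤ) := by
  by_cases h1 : ((1:ℤ), j) ∈ Xi <;> by_cases h2 : ((2:ℤ), j) ∈ Xi <;>
    simp [col, Finset.filter_insert, Finset.filter_singleton, h1, h2]

lemma col_union (A B : Finset (ℤ×ℤ)) (j : ℤ) : col (A ∪ B) j = col A j ∪ col B j := by
  ext i; simp [col]; tauto

lemma X_succ {g k : ℤ} {lam : ℤ → ℤ} {j : ℤ} (h : memL g k lam 1 j) :
    X k lam (j+1) = X k lam j - 2 := by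
  simp only [X, h.2.2]; ring

theorem stmt4 (g k : ℤ) (lam : ℤ → ℤ) (hgk : g < k)
    (hdec : ∀ j : ℤ, g ≤ j → j ≤ k → lam (j + 1) ≤ lam j)
    (r q : ℤ) (hr : g + 1 ≤ r) (hrq : r ≤ q) (hqk : q ≤ k)
    (hrLbar : (r - 1) ∈ Lbar g k lam)
    (hL1 : ∀ j : ℤ, r ≤ j → j ≤ q - 1 → j ∈ L g k lam 1)
    (Psi Xi : Finset (ℤ × ℤ))
    (hPsi : Psi ∈ Patt g k g (r - 1)) (hPsinb : ¬ Bulky g k lam g (r - 1) Psi)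
    (hXi : Xi ∈ Patt g k r q) (hXinb : ¬ Bulky g k lam r q Xi)
    (hwt1 : ∀ j : ℤ, r ≤ j → j ≤ q - 1 → (col Xi j).card = 1)
    (hwt2 : (col Xi q).card = 2) :
    theta g k lam q (Psi ∪ Xi) =
      2 * theta g k lam (r - 1) Psi * Rfac g k lam r (q - 1) := by
  have hgr : g ≤ r - 1 := by omega
  simp only [Patt, if_pos hgr, Set.mem_setOf_eq] at hPsi
  simp only [Patt, if_pos hrq, Set.mem_setOf_eq] at hXi
  obtain ⟨hPsiSub, -⟩ := hPsi
  obtain ⟨hXiSub, -⟩ := hXi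
  -- membership in L(1)
  have hmem1 : ∀ j : ℤ, r ≤ j → j ≤ q - 1 → memL g k lam 1 j := fun j h1 h2 => hL1 j h1 h2
  have hnot0 : ∀ j : ℤ, memL g k lam 1 j → ¬ memL g k lam 0 j := by
    intro j h h0
    have := h.2.2; have := h0.2.2; omega
  -- columns of the union
  have hXiCol : ∀ j : ℤ, j ≤ r - 1 → col Xi j = ∅ := by
    intro j hj
    ext i
    simp only [col, Finset.mem_filter, Finset.notMem_empty, iff_false, not_and]
    intro _ hm
    have := hXiSub hm
    simp only [Finset.mem_product, Finset.mem_Icc] at this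
    omega
  have hPsiCol : ∀ j : ℤ, r ≤ j → col Psi j = ∅ := by
    intro j hj
    ext i
    simp only [col, Finset.mem_filter, Finset.notMem_empty, iff_false, not_and]
    intro _ hm
    have := hPsiSub hm
    simp only [Finset.mem_product, Finset.mem_Icc] at this
    omega
  have hUlo : ∀ j : ℤ, j ≤ r - 1 → col (Psi ∪ Xi) j = col Psi j := by
    intro j hj; rw [col_union, hXiCol j hj, Finset.union_empty]
  have hUhi : ∀ j : ℤ, r ≤ j → col (Psi ∪ Xi) j = col Xi j := by
    intro j hj; rw [col_union, hPsiCol j hj, Finset.empty_union]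
  -- singleton columns
  have hXi1 : ∀ j : ℤ, r ≤ j → j ≤ q - 1 → col Xi j = {1} ∨ col Xi j = {2} := by
    intro j h1 h2
    have hc := hwt1 j h1 h2
    rcases col_cases Xi j with h|h|h|h
    · rw [h] at hc; simp at hc
    · exact Or.inl h
    · exact Or.inr h
    · rw [h] at hc; norm_num at hc
  have hXiq : col Xi q = ({1,2} : Finset ℤ) := by
    rcases col_cases Xi q with h|h|h|h <;> rw [h] at hwt2 ⊢ <;> first | rfl | norm_num at hwt2
  -- weights in the middle
  have hwmid : ∀ j : ℤ, r ≤ j → j ≤ q - 2 →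
      w g k lam j (col Xi j) (col Xi (j+1)) = X k lam j - 2 := by
    intro j h1 h2
    have hm1 : memL g k lam 1 j := hmem1 j h1 (by omega)
    rw [w, if_neg (hnot0 j hm1), if_pos hm1]
    exact wL1_ss _ (hXi1 j h1 (by omega)) (hXi1 (j+1) (by omega) (by omega))
  -- key induction
  have key : ∀ n : ℕ, ∀ s : ℤ, r ≤ s → s + n = q - 1 →
      ∏ j ∈ Finset.Icc s (q-1), w g k lam j (col Xi j) (col Xi (j+1)) =
        2 * ∏ j ∈ Finset.Icc (s+1) (q-1), X k lam j := by
    intro n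
    induction n with
    | zero =>
      intro s hrs hs
      have hsq : s = q - 1 := by omega
      subst hsq
      rw [Finset.Icc_self, Finset.prod_singleton,
        Finset.Icc_eq_empty (by omega), Finset.prod_empty, mul_one]
      have hm1 : memL g k lam 1 (q-1) := hmem1 (q-1) hrs le_rfl
      rw [w, if_neg (hnot0 _ hm1), if_pos hm1, show q - 1 + 1 = q from by ring, hXiq]
      exact wL1_s2 _ (hXi1 (q-1) hrs le_rfl) rfl
    | succ n ih =>
      intro s hrs hs
      have hslt : s ≤ q - 2 := by omega
      have hins : Finset.Icc s (q-1) = insert s (Finset.Icc (s+1) (q-1)) := by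
        ext x; simp only [Finset.mem_Icc, Finset.mem_insert]; omega
      rw [hins, Finset.prod_insert (by simp only [Finset.mem_Icc]; omega),
        ih (s+1) (by omega) (by omega), hwmid s hrs hslt,
        show X k lam s - 2 = X k lam (s+1) from (X_succ (hmem1 s hrs (by omega))).symm]
      have hins2 : Finset.Icc (s+1) (q-1) = insert (s+1) (Finset.Icc (s+1+1) (q-1)) := by
        ext x; simp only [Finset.mem_Icc, Finset.mem_insert]; omega
      rw [hins2, Finset.prod_insert (by simp only [Finset.mem_Icc]; omega)]
      ring
  -- Rfac simplification
  have hR : Rfac g k lam r (q-1) = ∏ j ∈ Finset.Icc r (q-1), X k lam j := by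
    rw [Rfac]
    have h0 : (Finset.Icc r (q-1)).filter (fun j => memL g k lam 0 j) = ∅ := by
      rw [Finset.filter_eq_empty_iff]
      intro j hj
      simp only [Finset.mem_Icc] at hj
      exact hnot0 j (hmem1 j hj.1 hj.2)
    have h1 : (Finset.Icc r (q-1)).filter (fun j => memL g k lam 1 j) = Finset.Icc r (q-1) := by
      rw [Finset.filter_eq_self]
      intro j hj
      simp only [Finset.mem_Icc] at hj
      exact hmem1 j hj.1 hj.2
    rw [h0, h1, Finset.prod_empty, one_mul]
  -- split theta
  have hLb0 : ¬ memL g k lam 0 (r-1) := fun h => hrLbar.2 (Or.inl h)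
  have hLb1 : ¬ memL g k lam 1 (r-1) := fun h => hrLbar.2 (Or.inr h)
  have hsplit : Finset.Icc g (q-1) = Finset.Icc g (r-2) ∪ Finset.Icc (r-1) (q-1) := by
    ext x; simp only [Finset.mem_Icc, Finset.mem_union]; omega
  have hdisj : Disjoint (Finset.Icc g (r-2)) (Finset.Icc (r-1) (q-1)) := by
    rw [Finset.disjoint_left]
    intro a ha hb
    simp only [Finset.mem_Icc] at ha hb
    omega
  have hlow : ∏ j ∈ Finset.Icc g (r-2), w g k lam j (col (Psi ∪ Xi) j) (col (Psi ∪ Xi) (j+1)) =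
      theta g k lam (r-1) Psi := by
    rw [theta, show r - 1 - 1 = r - 2 from by ring]
    refine Finset.prod_congr rfl fun j hj => ?_
    simp only [Finset.mem_Icc] at hj
    rw [hUlo j (by omega), hUlo (j+1) (by omega)]
  have hins3 : Finset.Icc (r-1) (q-1) = insert (r-1) (Finset.Icc r (q-1)) := by
    ext x; simp only [Finset.mem_Icc, Finset.mem_insert]; omega
  have hhigh : ∏ j ∈ Finset.Icc r (q-1),
        w g k lam j (col (Psi ∪ Xi) j) (col (Psi ∪ Xi) (j+1)) =
      ∏ j ∈ Finset.Icc r (q-1), w g k lam j (col Xi j) (col Xi (j+1)) := by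
    refine Finset.prod_congr rfl fun j hj => ?_
    simp only [Finset.mem_Icc] at hj
    rw [hUhi j (by omega), hUhi (j+1) (by omega)]
  have hwr1 : w g k lam (r-1) (col (Psi ∪ Xi) (r-1)) (col (Psi ∪ Xi) (r-1+1)) =
      (Nat.factorial (col Xi r).card : ℤ) * ff (X k lam r) (2 - (col Xi r).card) := by
    rw [show r - 1 + 1 = r from by ring, hUlo (r-1) le_rfl, hUhi r le_rfl,
      w, if_neg hLb0, if_neg hLb1, show r - 1 + 1 = r from by ring]
  rw [theta, hsplit, Finset.prod_union hdisj, hlow, hins3,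
    Finset.prod_insert (by simp only [Finset.mem_Icc]; omega), hwr1, hhigh, hR]
  rcases eq_or_lt_of_le hrq with hreq | hrlt
  · subst hreq
    rw [Finset.Icc_eq_empty (by omega), Finset.prod_empty, hwt2]
    norm_num [ff]
    ring
  · have hcard : (col Xi r).card = 1 := hwt1 r le_rfl (by omega)
    rw [hcard, key (q-1-r).toNat r le_rfl (by omega)]
    have hins4 : Finset.Icc r (q-1) = insert r (Finset.Icc (r+1) (q-1)) := by
      ext x; simp only [Finset.mem_Icc, Finset.mem_insert]; omega
    rw [hins4, Finset.prod_insert (by simp only [Finset.mem_Icc]; omega)]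
    simp only [ff]
    norm_num
    ring
end

section
/- Let g+1 ≤ r ≤ q ≤ k with r−1 ∈ Lbar and [r,q−1] ⊆ L(1), and let Ψ ∈ 𝔛nb[g,r−1]. Then the ideal of ℤ generated by { θ_{Ψ∪Ξ} : Ξ ∈ 𝔛[r,q] } equals the principal ideal generated by θ_Ψ · R_{[r,q−1]} · gcd(X_q, 2). -/
namespace CPAux
open CP

lemma subset_pair {s : Finset ℤ} (h : s ⊆ {1,2}) :
    s = ∅ ∨ s = {1} ∨ s = {2} ∨ s = {1,2} := by
  have hp : s ∈ ({1,2}:Finset ℤ).powerset := Finset.mem_powerset.2 h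
  have hps : ({1,2}:Finset ℤ).powerset = {∅,{1},{2},{1,2}} := by decide
  rw [hps] at hp; simpa using hp

lemma Icc_eq_insert {a b : ℤ} (h : a ≤ b) :
    Finset.Icc a b = insert b (Finset.Icc a (b-1)) := by
  ext x; simp only [Finset.mem_Icc, Finset.mem_insert]; omega

lemma not_mem_Icc_pred (a b : ℤ) : b ∉ Finset.Icc a (b-1) := by
  simp [Finset.mem_Icc]

lemma prod_Icc_top {a b : ℤ} (h : a ≤ b) (f : ℤ → ℤ) :
    ∏ j ∈ Finset.Icc a b, f j = (∏ j ∈ Finset.Icc a (b-1), f j) * f b := by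
  rw [Icc_eq_insert h, Finset.prod_insert (not_mem_Icc_pred a b)]; ring

lemma Icc_eq_insert_bot {a b : ℤ} (h : a ≤ b) :
    Finset.Icc a b = insert a (Finset.Icc (a+1) b) := by
  ext x; simp only [Finset.mem_Icc, Finset.mem_insert]; omega

lemma span_image_mul (c : ℤ) (S : Set ℤ) :
    Ideal.span ((fun x => c * x) '' S) = Ideal.span {c} * Ideal.span S := by
  rw [Ideal.span_mul_span', Set.singleton_mul]

lemma span_image_mul_right (c : ℤ) (S : Set ℤ) :
    Ideal.span ((fun x => x * c) '' S) = Ideal.span S * Ideal.span {c} := by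
  rw [mul_comm, ← span_image_mul]
  congr 1
  exact Set.image_congr (fun x _ => mul_comm x c)

/-! ### evaluation lemmas -/

lemma ff_zero (x : ℤ) : ff x 0 = 1 := by simp [ff]
lemma ff_one (x : ℤ) : ff x 1 = x := by simp [ff]
lemma ff_two (x : ℤ) : ff x 2 = x * (x - 1) := by
  rw [ff, Finset.prod_range_succ, Finset.prod_range_one]; norm_num

def fcol (k : ℤ) (lam : ℤ → ℤ) (r : ℤ) (d : Finset ℤ) : ℤ :=
  (Nat.factorial d.card : ℤ) * ff (X k lam r) (2 - d.card)

lemma fcol_pair (k : ℤ) (lam : ℤ → ℤ) (r : ℤ) : fcol k lam r {1,2} = 2 := by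
  rw [fcol, show ({1,2}:Finset ℤ).card = 2 from by decide]
  norm_num [ff_zero]

lemma fcol_one (k : ℤ) (lam : ℤ → ℤ) (r : ℤ) : fcol k lam r {1} = X k lam r := by
  rw [fcol, show ({1}:Finset ℤ).card = 1 from by decide]
  norm_num [ff_one]

lemma fcol_two (k : ℤ) (lam : ℤ → ℤ) (r : ℤ) : fcol k lam r {2} = X k lam r := by
  rw [fcol, show ({2}:Finset ℤ).card = 1 from by decide]
  norm_num [ff_one]

lemma fcol_empty (k : ℤ) (lam : ℤ → ℤ) (r : ℤ) :
    fcol k lam r ∅ = X k lam r * (X k lam r - 1) := by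
  rw [fcol, show (∅:Finset ℤ).card = 0 from rfl]
  norm_num [ff_two]

lemma wL1_pp (x : ℤ) : wL1 x {1,2} {1,2} = -(x * (x-3)) := by
  rw [wL1, if_pos (by decide)]
lemma wL1_p1 (x : ℤ) : wL1 x {1,2} {1} = x * (x-2) := by
  rw [wL1, if_neg (by decide), if_pos (by decide)]
lemma wL1_p2 (x : ℤ) : wL1 x {1,2} {2} = x * (x-2) := by
  rw [wL1, if_neg (by decide), if_pos (by decide)]
lemma wL1_p0 (x : ℤ) : wL1 x {1,2} ∅ = 0 := by
  rw [wL1, if_neg (by decide), if_neg (by decide), if_pos (by decide)]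
lemma wL1_op (x : ℤ) {c : Finset ℤ} (hc : c ≠ {1,2}) : wL1 x c {1,2} = 2 := by
  rw [wL1, if_neg (fun h => hc h.1), if_neg (fun h => hc h.1), if_neg (fun h => hc h.1),
    if_pos rfl]
lemma wL1_o1 (x : ℤ) {c : Finset ℤ} (hc : c ≠ {1,2}) : wL1 x c {1} = x - 2 := by
  rw [wL1, if_neg (fun h => hc h.1), if_neg (fun h => hc h.1), if_neg (fun h => hc h.1),
    if_neg (by decide), if_pos (by decide)]
lemma wL1_o2 (x : ℤ) {c : Finset ℤ} (hc : c ≠ {1,2}) : wL1 x c {2} = x - 2 := by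
  rw [wL1, if_neg (fun h => hc h.1), if_neg (fun h => hc h.1), if_neg (fun h => hc h.1),
    if_neg (by decide), if_pos (by decide)]
lemma wL1_o0 (x : ℤ) {c : Finset ℤ} (hc : c ≠ {1,2}) : wL1 x c ∅ = (x-2) * (x-1) := by
  rw [wL1, if_neg (fun h => hc h.1), if_neg (fun h => hc h.1), if_neg (fun h => hc h.1),
    if_neg (by decide), if_neg (by decide)]

lemma not_memL0 {g k : ℤ} {lam : ℤ → ℤ} {q : ℤ} (h : memL g k lam 1 q) :
    ¬ memL g k lam 0 q := by
  unfold memL at *; omega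

lemma w_eq_wL1 {g k : ℤ} {lam : ℤ → ℤ} {q : ℤ} (h : memL g k lam 1 q) (c d : Finset ℤ) :
    w g k lam q c d = wL1 (X k lam q) c d := by
  rw [w, if_neg (not_memL0 h), if_pos h]

lemma w_Lbar {g k : ℤ} {lam : ℤ → ℤ} {j : ℤ} (h0 : ¬ memL g k lam 0 j)
    (h1 : ¬ memL g k lam 1 j) (c d : Finset ℤ) :
    w g k lam j c d = (Nat.factorial d.card : ℤ) * ff (X k lam (j + 1)) (2 - d.card) := by
  rw [w, if_neg h0, if_neg h1]

lemma X_succ {g k : ℤ} {lam : ℤ → ℤ} {q : ℤ} (h : memL g k lam 1 q) :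
    X k lam (q+1) = X k lam q - 2 := by
  obtain ⟨-, -, h3⟩ := h; unfold X; omega

lemma Rfac_empty (g k : ℤ) (lam : ℤ → ℤ) (r : ℤ) : Rfac g k lam r (r-1) = 1 := by
  rw [Rfac, Finset.Icc_eq_empty (by omega)]; simp

lemma Rfac_succ {g k : ℤ} {lam : ℤ → ℤ} {r q : ℤ} (hrq : r ≤ q) (h : memL g k lam 1 q) :
    Rfac g k lam r q = Rfac g k lam r (q-1) * X k lam q := by
  rw [Rfac, Rfac, Icc_eq_insert hrq, Finset.filter_insert, Finset.filter_insert,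
    if_neg (not_memL0 h), if_pos h,
    Finset.prod_insert (fun hm => not_mem_Icc_pred r q (Finset.mem_filter.1 hm).1)]
  ring


noncomputable def chain (g k : ℤ) (lam : ℤ → ℤ) (r q : ℤ) (c : ℤ → Finset ℤ) : ℤ :=
  fcol k lam r (c r) * ∏ j ∈ Finset.Icc r (q-1), w g k lam j (c j) (c (j+1))

def T (g k : ℤ) (lam : ℤ → ℤ) (r q : ℤ) (d : Finset ℤ) : Set ℤ :=
  {x | ∃ c : ℤ → Finset ℤ, (∀ j, c j ⊆ ({1,2}:Finset ℤ)) ∧ c q = d ∧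
    x = chain g k lam r q c}

def U (g k : ℤ) (lam : ℤ → ℤ) (r q : ℤ) : Set ℤ :=
  {x | ∃ c : ℤ → Finset ℤ, (∀ j, c j ⊆ ({1,2}:Finset ℤ)) ∧ x = chain g k lam r q c}

lemma chain_congr {g k : ℤ} {lam : ℤ → ℤ} {r q : ℤ} {c1 c2 : ℤ → Finset ℤ}
    (h : ∀ j, r ≤ j → j ≤ q → c1 j = c2 j) (hrq : r ≤ q) :
    chain g k lam r q c1 = chain g k lam r q c2 := by
  rw [chain, chain, h r le_rfl hrq]
  congr 1
  refine Finset.prod_congr rfl (fun j hj => ?_)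
  rw [Finset.mem_Icc] at hj
  rw [h j hj.1 (by omega), h (j+1) (by omega) (by omega)]

lemma chain_succ {g k : ℤ} {lam : ℤ → ℤ} {r q : ℤ} (hrq : r ≤ q) (c : ℤ → Finset ℤ) :
    chain g k lam r (q+1) c = chain g k lam r q c * w g k lam q (c q) (c (q+1)) := by
  rw [chain, chain, show q+1-1 = q from by ring, prod_Icc_top hrq]
  ring

lemma T_succ {g k : ℤ} {lam : ℤ → ℤ} {r q : ℤ} (hrq : r ≤ q) {d' : Finset ℤ}
    (hd' : d' ⊆ ({1,2}:Finset ℤ)) :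
    T g k lam r (q+1) d' =
      (fun h => h * w g k lam q ∅ d') '' T g k lam r q ∅ ∪
      (fun h => h * w g k lam q {1} d') '' T g k lam r q {1} ∪
      (fun h => h * w g k lam q {2} d') '' T g k lam r q {2} ∪
      (fun h => h * w g k lam q {1,2} d') '' T g k lam r q {1,2} := by
  ext x
  constructor
  · rintro ⟨c, hc, hcq, rfl⟩
    have hx : chain g k lam r (q+1) c = chain g k lam r q c * w g k lam q (c q) (c (q+1)) :=
      chain_succ hrq c
    rcases subset_pair (hc q) with h | h | h | h
    · exact Or.inl (Or.inl (Or.inl ⟨chain g k lam r q c, ⟨c, hc, h, rfl⟩, by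
        rw [hx, h, hcq]⟩))
    · exact Or.inl (Or.inl (Or.inr ⟨chain g k lam r q c, ⟨c, hc, h, rfl⟩, by
        rw [hx, h, hcq]⟩))
    · exact Or.inl (Or.inr ⟨chain g k lam r q c, ⟨c, hc, h, rfl⟩, by
        rw [hx, h, hcq]⟩)
    · exact Or.inr ⟨chain g k lam r q c, ⟨c, hc, h, rfl⟩, by
        rw [hx, h, hcq]⟩
  · have key : ∀ d : Finset ℤ, (∃ h, h ∈ T g k lam r q d ∧ h * w g k lam q d d' = x) →
        x ∈ T g k lam r (q+1) d' := by
      rintro d ⟨h, ⟨c, hc, hcq, rfl⟩, rfl⟩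
      refine ⟨Function.update c (q+1) d', ?_, ?_, ?_⟩
      · intro j
        rcases eq_or_ne j (q+1) with rfl | hj
        · rw [Function.update_self]; exact hd'
        · rw [Function.update_of_ne hj]; exact hc j
      · rw [Function.update_self]
      · have hcc : chain g k lam r q (Function.update c (q+1) d') = chain g k lam r q c :=
          chain_congr (fun j h1 h2 => Function.update_of_ne (show j ≠ q+1 by omega) d' c) hrq
        rw [chain_succ hrq, Function.update_self,
          Function.update_of_ne (show q ≠ q+1 by omega), hcq, hcc]
    rintro (((⟨h, hh, rfl⟩ | ⟨h, hh, rfl⟩) | ⟨h, hh, rfl⟩) | ⟨h, hh, rfl⟩)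
    · exact key ∅ ⟨h, hh, rfl⟩
    · exact key {1} ⟨h, hh, rfl⟩
    · exact key {2} ⟨h, hh, rfl⟩
    · exact key {1,2} ⟨h, hh, rfl⟩

lemma T_base {g k : ℤ} {lam : ℤ → ℤ} {r : ℤ} {d : Finset ℤ} (hd : d ⊆ ({1,2}:Finset ℤ)) :
    T g k lam r r d = {fcol k lam r d} := by
  ext x
  simp only [T, Set.mem_setOf_eq, Set.mem_singleton_iff]
  constructor
  · rintro ⟨c, hc, hcq, rfl⟩
    rw [chain, Finset.Icc_eq_empty (by omega : ¬ r ≤ r - 1), Finset.prod_empty, hcq, mul_one]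
  · rintro rfl
    exact ⟨fun _ => d, fun _ => hd, rfl, by
      rw [chain, Finset.Icc_eq_empty (by omega : ¬ r ≤ r - 1), Finset.prod_empty, mul_one]⟩

lemma U_eq (g k : ℤ) (lam : ℤ → ℤ) (r q : ℤ) :
    U g k lam r q = T g k lam r q ∅ ∪ T g k lam r q {1} ∪ T g k lam r q {2} ∪
      T g k lam r q {1,2} := by
  ext x
  constructor
  · rintro ⟨c, hc, rfl⟩
    rcases subset_pair (hc q) with h | h | h | h
    · exact Or.inl (Or.inl (Or.inl ⟨c, hc, h, rfl⟩))
    · exact Or.inl (Or.inl (Or.inr ⟨c, hc, h, rfl⟩))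
    · exact Or.inl (Or.inr ⟨c, hc, h, rfl⟩)
    · exact Or.inr ⟨c, hc, h, rfl⟩
  · rintro (((⟨c, hc, -, rfl⟩ | ⟨c, hc, -, rfl⟩) | ⟨c, hc, -, rfl⟩) | ⟨c, hc, -, rfl⟩) <;>
      exact ⟨c, hc, rfl⟩


lemma dvd_span_le {a b : ℤ} (h : b ∣ a) : Ideal.span {a} ≤ Ideal.span ({b} : Set ℤ) :=
  Ideal.span_singleton_le_span_singleton.2 h

lemma sup4_le {A B C D T : Ideal ℤ} (hA : A ≤ T) (hB : B ≤ T) (hC : C ≤ T) (hD : D ≤ T) :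
    A ⊔ B ⊔ C ⊔ D ≤ T := sup_le (sup_le (sup_le hA hB) hC) hD

lemma le_sup4_B {A B C D : Ideal ℤ} : B ≤ A ⊔ B ⊔ C ⊔ D :=
  (le_sup_right.trans le_sup_left).trans le_sup_left

lemma key (g k : ℤ) (lam : ℤ → ℤ) (r : ℤ) :
    ∀ q, r ≤ q → q ≤ k → (∀ j, r ≤ j → j ≤ q-1 → memL g k lam 1 j) →
    Ideal.span (T g k lam r q {1,2}) = Ideal.span {2 * Rfac g k lam r (q-1)} ∧
    Ideal.span (T g k lam r q {1}) = Ideal.span {X k lam q * Rfac g k lam r (q-1)} ∧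
    Ideal.span (T g k lam r q {2}) = Ideal.span {X k lam q * Rfac g k lam r (q-1)} ∧
    Ideal.span (T g k lam r q ∅) ≤ Ideal.span {X k lam q * Rfac g k lam r (q-1)} := by
  refine Int.le_induction ?_ ?_
  · -- base q = r
    intro hk hcond
    rw [T_base (by decide), T_base (by decide), T_base (by decide), T_base (by decide),
      Rfac_empty, fcol_pair, fcol_one, fcol_two, fcol_empty]
    refine ⟨by norm_num, by norm_num, by norm_num, ?_⟩
    exact dvd_span_le ⟨X k lam r - 1, by ring⟩
  · -- step
    intro q hrq ih hk1 hcond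
    have hq1 : memL g k lam 1 q := hcond q hrq (by omega)
    obtain ⟨h12, h1, h2, h0⟩ := ih (by omega) (fun j hj1 hj2 => hcond j hj1 (by omega))
    set x := X k lam q with hx
    set R := Rfac g k lam r (q-1) with hR
    have hXs : X k lam (q+1) = x - 2 := X_succ hq1
    have hRs : Rfac g k lam r (q+1-1) = R * x := by
      rw [show q+1-1 = q from by ring]; exact Rfac_succ hrq hq1
    have hw : ∀ c d : Finset ℤ, w g k lam q c d = wL1 x c d := w_eq_wL1 hq1
    have expand : ∀ d' : Finset ℤ, d' ⊆ ({1,2}:Finset ℤ) →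
        Ideal.span (T g k lam r (q+1) d') =
          Ideal.span (T g k lam r q ∅) * Ideal.span {wL1 x ∅ d'} ⊔
          Ideal.span {x * R * wL1 x {1} d'} ⊔
          Ideal.span {x * R * wL1 x {2} d'} ⊔
          Ideal.span {2 * R * wL1 x {1,2} d'} := by
      intro d' hd'
      rw [T_succ hrq hd', Ideal.span_union, Ideal.span_union, Ideal.span_union,
        span_image_mul_right, span_image_mul_right, span_image_mul_right,
        span_image_mul_right, hw, hw, hw, hw, h1, h2, h12,
        Ideal.span_singleton_mul_span_singleton, Ideal.span_singleton_mul_span_singleton,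
        Ideal.span_singleton_mul_span_singleton]
    refine ⟨?_, ?_, ?_, ?_⟩
    · -- d' = {1,2}
      rw [expand {1,2} (by decide), hRs,
        wL1_op x (by decide), wL1_op x (by decide), wL1_op x (by decide), wL1_pp]
      refine le_antisymm (sup4_le ?_ ?_ ?_ ?_) ?_
      · exact ((Ideal.mul_mono_left h0).trans
          (le_of_eq (Ideal.span_singleton_mul_span_singleton _ _))).trans
          (dvd_span_le ⟨1, by ring⟩)
      · exact dvd_span_le ⟨1, by ring⟩
      · exact dvd_span_le ⟨1, by ring⟩
      · exact dvd_span_le ⟨-(x-3), by ring⟩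
      · exact (dvd_span_le ⟨1, by ring⟩).trans le_sup4_B
    · -- d' = {1}
      rw [expand {1} (by decide), hRs, hXs,
        wL1_o1 x (by decide), wL1_o1 x (by decide), wL1_o1 x (by decide), wL1_p1]
      refine le_antisymm (sup4_le ?_ ?_ ?_ ?_) ?_
      · exact ((Ideal.mul_mono_left h0).trans
          (le_of_eq (Ideal.span_singleton_mul_span_singleton _ _))).trans
          (dvd_span_le ⟨1, by ring⟩)
      · exact dvd_span_le ⟨1, by ring⟩
      · exact dvd_span_le ⟨1, by ring⟩
      · exact dvd_span_le ⟨2, by ring⟩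
      · exact (dvd_span_le ⟨1, by ring⟩).trans le_sup4_B
    · -- d' = {2}
      rw [expand {2} (by decide), hRs, hXs,
        wL1_o2 x (by decide), wL1_o2 x (by decide), wL1_o2 x (by decide), wL1_p2]
      refine le_antisymm (sup4_le ?_ ?_ ?_ ?_) ?_
      · exact ((Ideal.mul_mono_left h0).trans
          (le_of_eq (Ideal.span_singleton_mul_span_singleton _ _))).trans
          (dvd_span_le ⟨1, by ring⟩)
      · exact dvd_span_le ⟨1, by ring⟩
      · exact dvd_span_le ⟨1, by ring⟩
      · exact dvd_span_le ⟨2, by ring⟩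
      · exact (dvd_span_le ⟨1, by ring⟩).trans le_sup4_B
    · -- d' = ∅
      rw [expand ∅ (by decide), hRs, hXs,
        wL1_o0 x (by decide), wL1_o0 x (by decide), wL1_o0 x (by decide), wL1_p0]
      refine sup4_le ?_ ?_ ?_ ?_
      · exact ((Ideal.mul_mono_left h0).trans
          (le_of_eq (Ideal.span_singleton_mul_span_singleton _ _))).trans
          (dvd_span_le ⟨x-1, by ring⟩)
      · exact dvd_span_le ⟨x-1, by ring⟩
      · exact dvd_span_le ⟨x-1, by ring⟩
      · exact dvd_span_le ⟨0, by ring⟩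

lemma col_subset (Xi : Finset (ℤ × ℤ)) (j : ℤ) : col Xi j ⊆ ({1,2} : Finset ℤ) :=
  Finset.filter_subset _ _

lemma col_union (A B : Finset (ℤ × ℤ)) (j : ℤ) : col (A ∪ B) j = col A j ∪ col B j := by
  ext i; simp only [col, Finset.mem_filter, Finset.mem_union]; tauto

lemma col_empty_of {A : Finset (ℤ × ℤ)} {p q : ℤ}
    (h : A ⊆ ({1,2} : Finset ℤ) ×ˢ Finset.Icc p q) {j : ℤ} (hj : j < p ∨ q < j) :
    col A j = ∅ := by
  ext i
  simp only [col, Finset.mem_filter, Finset.notMem_empty, iff_false, not_and]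
  intro _ hmem
  have := h hmem
  rw [Finset.mem_product, Finset.mem_Icc] at this
  omega

lemma Patt_subset {g k p q : ℤ} (hpq : p ≤ q) {Xi : Finset (ℤ × ℤ)}
    (h : Xi ∈ Patt g k p q) : Xi ⊆ ({1,2} : Finset ℤ) ×ˢ Finset.Icc p q := by
  rw [Patt, if_pos hpq] at h; exact h.1

lemma mem_Patt_mid {g k r q : ℤ} (hg : g + 1 ≤ r) (hq : q ≤ k) (hrq : r ≤ q)
    {Xi : Finset (ℤ × ℤ)} (h : Xi ⊆ ({1,2} : Finset ℤ) ×ˢ Finset.Icc r q) :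
    Xi ∈ Patt g k r q := by
  rw [Patt, if_pos hrq]
  refine ⟨h, ?_⟩
  intro p hp
  exfalso
  simp only [Finset.mem_product, Finset.mem_inter, Finset.mem_Icc, Finset.mem_insert,
    Finset.mem_singleton] at hp
  omega

lemma bridge {g k : ℤ} {lam : ℤ → ℤ} {r q : ℤ} (hg : g + 1 ≤ r) (hrq : r ≤ q) (hq : q ≤ k) :
    (fun Xi => chain g k lam r q (col Xi)) '' Patt g k r q = U g k lam r q := by
  ext y
  constructor
  · rintro ⟨Xi, -, rfl⟩
    exact ⟨col Xi, col_subset Xi, rfl⟩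
  · rintro ⟨c, hc, rfl⟩
    refine ⟨(({1,2} : Finset ℤ) ×ˢ Finset.Icc r q).filter (fun p => p.1 ∈ c p.2),
      mem_Patt_mid hg hq hrq (Finset.filter_subset _ _), ?_⟩
    refine chain_congr (fun j h1 h2 => ?_) hrq
    ext i
    simp only [col, Finset.mem_filter, Finset.mem_product, Finset.mem_Icc]
    constructor
    · rintro ⟨-, -, hi⟩; exact hi
    · intro hi
      have hi2 := hc j hi
      exact ⟨hi2, ⟨⟨hi2, h1, h2⟩, hi⟩⟩

lemma theta_split {g k : ℤ} {lam : ℤ → ℤ} {r q : ℤ} (hg : g + 1 ≤ r) (hrq : r ≤ q)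
    (hq : q ≤ k) (h0 : ¬ memL g k lam 0 (r-1)) (h1 : ¬ memL g k lam 1 (r-1))
    {Psi : Finset (ℤ × ℤ)} (hPsi : Psi ⊆ ({1,2} : Finset ℤ) ×ˢ Finset.Icc g (r-1))
    {Xi : Finset (ℤ × ℤ)} (hXi : Xi ⊆ ({1,2} : Finset ℤ) ×ˢ Finset.Icc r q) :
    theta g k lam q (Psi ∪ Xi) = theta g k lam (r-1) Psi * chain g k lam r q (col Xi) := by
  have cP : ∀ j : ℤ, r ≤ j → col Psi j = ∅ := fun j hj => col_empty_of hPsi (by omega)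
  have cX : ∀ j : ℤ, j ≤ r - 1 → col Xi j = ∅ := fun j hj => col_empty_of hXi (by omega)
  have cU : ∀ j : ℤ, j ≤ r - 1 → col (Psi ∪ Xi) j = col Psi j := by
    intro j hj; rw [col_union, cX j hj, Finset.union_empty]
  have cV : ∀ j : ℤ, r ≤ j → col (Psi ∪ Xi) j = col Xi j := by
    intro j hj; rw [col_union, cP j hj, Finset.empty_union]
  have hsplit : Finset.Icc g (q-1) = Finset.Icc g (r-2) ∪ Finset.Icc (r-1) (q-1) := by
    ext j; simp only [Finset.mem_Icc, Finset.mem_union]; omega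
  have hdisj : Disjoint (Finset.Icc g (r-2)) (Finset.Icc (r-1) (q-1)) := by
    rw [Finset.disjoint_left]
    intro j hj1 hj2
    rw [Finset.mem_Icc] at hj1 hj2
    omega
  rw [theta, hsplit, Finset.prod_union hdisj]
  congr 1
  · -- left factor equals theta (r-1) Psi
    rw [theta, show r - 1 - 1 = r - 2 from by ring]
    refine Finset.prod_congr rfl (fun j hj => ?_)
    rw [Finset.mem_Icc] at hj
    rw [cU j (by omega), cU (j+1) (by omega)]
  · -- right factor equals chain
    rw [Icc_eq_insert_bot (by omega : r - 1 ≤ q - 1), show r-1+1 = r from by ring,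
      Finset.prod_insert (by simp only [Finset.mem_Icc]; omega)]
    rw [chain]
    congr 1
    · -- the w at r-1 equals fcol
      rw [cU (r-1) le_rfl, show r-1+1 = r from by ring, cV r le_rfl, w_Lbar h0 h1,
        show r-1+1 = r from by ring, fcol]
    · refine Finset.prod_congr rfl (fun j hj => ?_)
      rw [Finset.mem_Icc] at hj
      rw [cV j (by omega), cV (j+1) (by omega)]


lemma span_U {g k : ℤ} {lam : ℤ → ℤ} {r q : ℤ} (hrq : r ≤ q) (hqk : q ≤ k)
    (hL1 : ∀ j, r ≤ j → j ≤ q - 1 → memL g k lam 1 j) :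
    Ideal.span (U g k lam r q) =
      Ideal.span {Rfac g k lam r (q-1) * (Int.gcd (X k lam q) 2 : ℤ)} := by
  obtain ⟨h12, h1, h2, h0⟩ := key g k lam r q hrq hqk hL1
  rw [U_eq, Ideal.span_union, Ideal.span_union, Ideal.span_union, h1, h2, h12]
  set x := X k lam q with hx
  set R := Rfac g k lam r (q-1) with hR
  obtain ⟨u, hu⟩ : ((Int.gcd x 2 : ℤ)) ∣ x := Int.gcd_dvd_left x 2
  obtain ⟨v, hv⟩ : ((Int.gcd x 2 : ℤ)) ∣ 2 := Int.gcd_dvd_right x 2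
  refine le_antisymm (sup4_le ?_ ?_ ?_ ?_) ?_
  · exact h0.trans (dvd_span_le ⟨u, by linear_combination R * hu⟩)
  · exact dvd_span_le ⟨u, by linear_combination R * hu⟩
  · exact dvd_span_le ⟨u, by linear_combination R * hu⟩
  · exact dvd_span_le ⟨v, by linear_combination R * hv⟩
  · have hmem : R * (Int.gcd x 2 : ℤ) ∈ Ideal.span {x * R} ⊔ Ideal.span ({2 * R} : Set ℤ) := by
      refine Submodule.mem_sup.2 ⟨x.gcdA 2 * (x * R),
        Ideal.mem_span_singleton.2 (dvd_mul_left _ _), x.gcdB 2 * (2 * R),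
        Ideal.mem_span_singleton.2 (dvd_mul_left _ _), ?_⟩
      have hb := Int.gcd_eq_gcd_ab x 2
      linear_combination (-R) * hb
    refine le_trans ((Ideal.span_singleton_le_iff_mem _).2 hmem) ?_
    exact sup_le le_sup4_B le_sup_right

end CPAux


open CP
theorem stmt5 (g k : ℤ) (lam : ℤ → ℤ) (hgk : g < k)
    (hdec : ∀ j : ℤ, g ≤ j → j ≤ k → lam (j + 1) ≤ lam j)
    (r q : ℤ) (hr : g + 1 ≤ r) (hrq : r ≤ q) (hqk : q ≤ k)
    (hrLbar : (r - 1) ∈ Lbar g k lam)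
    (hL1 : ∀ j : ℤ, r ≤ j → j ≤ q - 1 → j ∈ L g k lam 1)
    (Psi : Finset (ℤ × ℤ))
    (hPsi : Psi ∈ Patt g k g (r - 1)) (hPsinb : ¬ Bulky g k lam g (r - 1) Psi) :
    Ideal.span ((fun Xi => theta g k lam q (Psi ∪ Xi)) '' Patt g k r q) =
      Ideal.span {theta g k lam (r - 1) Psi * Rfac g k lam r (q - 1) *
        (Int.gcd (X k lam q) 2 : ℤ)} := by
  have hnb := hrLbar.2
  have h0 : ¬ memL g k lam 0 (r-1) := fun h => hnb (Set.mem_union_left _ h)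
  have h1 : ¬ memL g k lam 1 (r-1) := fun h => hnb (Set.mem_union_right _ h)
  have hPsiSub : Psi ⊆ ({1,2} : Finset ℤ) ×ˢ Finset.Icc g (r-1) :=
    CPAux.Patt_subset (by omega) hPsi
  have himg : (fun Xi => theta g k lam q (Psi ∪ Xi)) '' Patt g k r q
      = (fun y => theta g k lam (r-1) Psi * y) ''
        ((fun Xi => CPAux.chain g k lam r q (col Xi)) '' Patt g k r q) := by
    rw [← Set.image_comp]
    exact Set.image_congr (fun Xi hXi =>
      CPAux.theta_split hr hrq hqk h0 h1 hPsiSub (CPAux.Patt_subset hrq hXi))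
  rw [himg, CPAux.bridge hr hrq hqk, CPAux.span_image_mul,
    CPAux.span_U hrq hqk (fun j hj1 hj2 => hL1 j hj1 hj2),
    Ideal.span_singleton_mul_span_singleton, ← mul_assoc]
end

section
/- For each κ in [1,K] choose Ψ_κ ∈ 𝔛nb[g,p(κ)−1] with θ_{Ψ_κ} ≠ 0, and let 𝔱_κ be the ideal of ℤ generated by the integer quotients θ_{Ψ_κ∪Ξ}/θ_{Ψ_κ} for Ξ ∈ 𝔛[p(κ),q(κ)] (these quotients are integers since θ_{Ψ_κ} divides θ_{Ψ_κ∪Ξ}, and they do not depend on the choice of Ψ_κ). Then the ideal of ℤ generated by { θ_Ξ : Ξ ∈ 𝔛[g,k] } equals the product of ideals ∏_{κ ∈ [1,K]} 𝔱_κ. -/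
namespace CP

-- helpers
lemma Icc_eq_Ico (a b : ℤ) : Finset.Icc a b = Finset.Ico a (b + 1) := by
  ext x; simp [Int.lt_add_one_iff]

lemma theta_eq_Ico (g k : ℤ) (lam : ℤ → ℤ) (r : ℤ) (Xi : Finset (ℤ × ℤ)) :
    theta g k lam r Xi = ∏ j ∈ Finset.Ico g r, w g k lam j (col Xi j) (col Xi (j + 1)) := by
  rw [theta, Icc_eq_Ico, sub_add_cancel]

lemma theta_split (g k m r : ℤ) (lam : ℤ → ℤ) (hm : g ≤ m) (hr : m ≤ r) (Xi : Finset (ℤ × ℤ)) :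
    theta g k lam r Xi = theta g k lam m Xi *
      ∏ j ∈ Finset.Ico m r, w g k lam j (col Xi j) (col Xi (j + 1)) := by
  rw [theta_eq_Ico, theta_eq_Ico, ← Finset.prod_union (Finset.Ico_disjoint_Ico_consecutive g m r),
    Finset.Ico_union_Ico_eq_Ico hm hr]

lemma col_union_eq_left {B : Finset (ℤ × ℤ)} {r : ℤ} (h : ∀ i, (i, r) ∉ B)
    (A : Finset (ℤ × ℤ)) : col (A ∪ B) r = col A r := by
  unfold col
  apply Finset.filter_congr
  intro i _
  simp [Finset.mem_union, h i]

lemma col_union_eq_right {A : Finset (ℤ × ℤ)} {r : ℤ} (h : ∀ i, (i, r) ∉ A)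
    (B : Finset (ℤ × ℤ)) : col (A ∪ B) r = col B r := by
  unfold col
  apply Finset.filter_congr
  intro i _
  simp [Finset.mem_union, h i]

lemma not_mem_of_subset_strip {B : Finset (ℤ × ℤ)} {p q r : ℤ}
    (hB : B ⊆ ({1, 2} : Finset ℤ) ×ˢ Finset.Icc p q) (hr : r ∉ Finset.Icc p q) :
    ∀ i, (i, r) ∉ B := by
  intro i hi
  have := hB hi
  rw [Finset.mem_product] at this
  exact hr this.2

lemma w_indep (g k : ℤ) (lam : ℤ → ℤ) (r : ℤ) (h0 : ¬ memL g k lam 0 r)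
    (h1 : ¬ memL g k lam 1 r) (c c' d : Finset ℤ) :
    w g k lam r c d = w g k lam r c' d := by
  simp [w, h0, h1]

end CP
namespace CP

lemma theta_union (g k m qq : ℤ) (lam : ℤ → ℤ) (h0 : ¬ memL g k lam 0 m)
    (h1 : ¬ memL g k lam 1 m) (hg : g ≤ m) (hmq : m ≤ qq)
    {A B : Finset (ℤ × ℤ)} (hA : A ⊆ ({1, 2} : Finset ℤ) ×ˢ Finset.Icc g m)
    (hB : B ⊆ ({1, 2} : Finset ℤ) ×ˢ Finset.Icc (m + 1) qq) :
    theta g k lam qq (A ∪ B) = theta g k lam m A *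
      ∏ j ∈ Finset.Ico m qq, w g k lam j (col B j) (col B (j + 1)) := by
  rw [theta_split g k m qq lam hg hmq]
  congr 1
  · rw [theta_eq_Ico, theta_eq_Ico]
    apply Finset.prod_congr rfl
    intro j hj
    rw [Finset.mem_Ico] at hj
    rw [col_union_eq_left (not_mem_of_subset_strip hB
        (by simp only [Finset.mem_Icc]; omega)) A,
      col_union_eq_left (not_mem_of_subset_strip hB
        (by simp only [Finset.mem_Icc]; omega)) A]
  · apply Finset.prod_congr rfl
    intro j hj
    rw [Finset.mem_Ico] at hj
    have hd : col (A ∪ B) (j + 1) = col B (j + 1) :=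
      col_union_eq_right (not_mem_of_subset_strip hA
        (by simp only [Finset.mem_Icc]; omega)) B
    rcases eq_or_lt_of_le hj.1 with h | h
    · rw [hd, ← h]
      exact w_indep g k lam m h0 h1 _ _ _
    · have hc : col (A ∪ B) j = col B j :=
        col_union_eq_right (not_mem_of_subset_strip hA
          (by simp only [Finset.mem_Icc]; omega)) B
      rw [hc, hd]

lemma mem_Patt_right_iff {g k p q : ℤ} (hpq : p ≤ q) (hgp : g < p) (hqk : q ≤ k)
    (Xi : Finset (ℤ × ℤ)) :
    Xi ∈ Patt g k p q ↔ Xi ⊆ ({1, 2} : Finset ℤ) ×ˢ Finset.Icc p q := by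
  rw [Patt, if_pos hpq]
  have h : ({g, k + 1} : Finset ℤ) ∩ Finset.Icc p q = ∅ := by
    ext x
    simp only [Finset.mem_inter, Finset.mem_insert, Finset.mem_singleton, Finset.mem_Icc,
      Finset.notMem_empty, iff_false]
    omega
  simp [Set.mem_setOf_eq, h]

lemma mem_Patt_left_iff {g k q : ℤ} (hq : g ≤ q) (hqk : q ≤ k) (Xi : Finset (ℤ × ℤ)) :
    Xi ∈ Patt g k g q ↔ Xi ⊆ ({1, 2} : Finset ℤ) ×ˢ Finset.Icc g q ∧
      (({1, 2} : Finset ℤ) ×ˢ ({g} : Finset ℤ)) ⊆ Xi := by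
  rw [Patt, if_pos hq]
  have h : ({g, k + 1} : Finset ℤ) ∩ Finset.Icc g q = {g} := by
    ext x
    simp only [Finset.mem_inter, Finset.mem_insert, Finset.mem_singleton, Finset.mem_Icc]
    omega
  simp [Set.mem_setOf_eq, h]

lemma Patt_self (g k : ℤ) (hk : g ≤ k) :
    Patt g k g g = {(({1, 2} : Finset ℤ) ×ˢ ({g} : Finset ℤ))} := by
  ext Xi
  rw [mem_Patt_left_iff le_rfl hk]
  simp only [Set.mem_singleton_iff]
  constructor
  · rintro ⟨h1, h2⟩
    apply Finset.Subset.antisymm _ h2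
    intro x hx
    have := h1 hx
    simpa [Finset.Icc_self] using this
  · rintro rfl
    exact ⟨by simp [Finset.Icc_self], le_rfl⟩

lemma theta_at_g (g k : ℤ) (lam : ℤ → ℤ) (Xi : Finset (ℤ × ℤ)) :
    theta g k lam g Xi = 1 := by
  rw [theta_eq_Ico, Finset.Ico_self, Finset.prod_empty]

lemma glue_mem {g k m q : ℤ} (hm : g ≤ m) (hmq : m < q) (hqk : q ≤ k)
    {A B : Finset (ℤ × ℤ)} (hA : A ∈ Patt g k g m) (hB : B ∈ Patt g k (m + 1) q) :
    A ∪ B ∈ Patt g k g q := by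
  rw [mem_Patt_left_iff hm (by omega) A] at hA
  rw [mem_Patt_right_iff (by omega) (by omega) hqk B] at hB
  rw [mem_Patt_left_iff (by omega) hqk]
  constructor
  · intro x hx
    rw [Finset.mem_union] at hx
    rcases hx with h | h
    · have := hA.1 h
      rw [Finset.mem_product] at this ⊢
      refine ⟨this.1, ?_⟩
      rw [Finset.mem_Icc] at *
      omega
    · have := hB h
      rw [Finset.mem_product] at this ⊢
      refine ⟨this.1, ?_⟩
      rw [Finset.mem_Icc] at *
      omega
  · exact hA.2.trans Finset.subset_union_left

lemma split_mem {g k m q : ℤ} (hm : g ≤ m) (hmq : m < q) (hqk : q ≤ k)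
    {Xi : Finset (ℤ × ℤ)} (h : Xi ∈ Patt g k g q) :
    (Xi ∩ (({1, 2} : Finset ℤ) ×ˢ Finset.Icc g m)) ∈ Patt g k g m ∧
    (Xi ∩ (({1, 2} : Finset ℤ) ×ˢ Finset.Icc (m + 1) q)) ∈ Patt g k (m + 1) q ∧
    Xi = (Xi ∩ (({1, 2} : Finset ℤ) ×ˢ Finset.Icc g m)) ∪
      (Xi ∩ (({1, 2} : Finset ℤ) ×ˢ Finset.Icc (m + 1) q)) := by
  rw [mem_Patt_left_iff (by omega) hqk] at h
  refine ⟨?_, ?_, ?_⟩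
  · rw [mem_Patt_left_iff hm (by omega)]
    refine ⟨Finset.inter_subset_right, ?_⟩
    intro x hx
    rw [Finset.mem_inter]
    refine ⟨h.2 hx, ?_⟩
    rw [Finset.mem_product] at hx ⊢
    refine ⟨hx.1, ?_⟩
    rw [Finset.mem_singleton] at hx
    rw [Finset.mem_Icc]
    omega
  · rw [mem_Patt_right_iff (by omega) (by omega) hqk]
    exact Finset.inter_subset_right
  · ext x
    simp only [Finset.mem_union, Finset.mem_inter]
    constructor
    · intro hx
      have := h.1 hx
      rw [Finset.mem_product, Finset.mem_Icc] at this
      rcases le_or_gt x.2 m with hc | hc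
      · left
        refine ⟨hx, ?_⟩
        rw [Finset.mem_product, Finset.mem_Icc]
        exact ⟨this.1, this.2.1, hc⟩
      · right
        refine ⟨hx, ?_⟩
        rw [Finset.mem_product, Finset.mem_Icc]
        exact ⟨this.1, by omega, this.2.2⟩
    · rintro (⟨hx, _⟩ | ⟨hx, _⟩) <;> exact hx

end CP
namespace CP

lemma span_split (g k m q : ℤ) (lam : ℤ → ℤ) (hm : g ≤ m) (hmq : m < q) (hqk : q ≤ k)
    (h0 : ¬ memL g k lam 0 m) (h1 : ¬ memL g k lam 1 m) :
    Ideal.span ((fun Xi => theta g k lam q Xi) '' Patt g k g q) =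
      Ideal.span ((fun Xi => theta g k lam m Xi) '' Patt g k g m) *
      Ideal.span ((fun Xi => ∏ j ∈ Finset.Ico m q, w g k lam j (col Xi j) (col Xi (j + 1))) ''
        Patt g k (m + 1) q) := by
  apply le_antisymm
  · rw [Ideal.span_le]
    rintro _ ⟨Xi, hXi, rfl⟩
    obtain ⟨hA, hB, hU⟩ := split_mem hm hmq hqk hXi
    have hAsub : (Xi ∩ (({1, 2} : Finset ℤ) ×ˢ Finset.Icc g m)) ⊆
        ({1, 2} : Finset ℤ) ×ˢ Finset.Icc g m := Finset.inter_subset_right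
    have hBsub : (Xi ∩ (({1, 2} : Finset ℤ) ×ˢ Finset.Icc (m + 1) q)) ⊆
        ({1, 2} : Finset ℤ) ×ˢ Finset.Icc (m + 1) q := Finset.inter_subset_right
    have key : theta g k lam q Xi = theta g k lam m (Xi ∩ (({1, 2} : Finset ℤ) ×ˢ Finset.Icc g m)) *
        ∏ j ∈ Finset.Ico m q, w g k lam j (col (Xi ∩ (({1, 2} : Finset ℤ) ×ˢ Finset.Icc (m + 1) q)) j)
          (col (Xi ∩ (({1, 2} : Finset ℤ) ×ˢ Finset.Icc (m + 1) q)) (j + 1)) := by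
      conv_lhs => rw [hU]
      exact theta_union g k m q lam h0 h1 hm (le_of_lt hmq) hAsub hBsub
    simp only [SetLike.mem_coe, key]
    exact Ideal.mul_mem_mul (Ideal.subset_span ⟨_, hA, rfl⟩) (Ideal.subset_span ⟨_, hB, rfl⟩)
  · rw [Ideal.span_mul_span', Ideal.span_le]
    rintro _ ⟨_, ⟨A, hA, rfl⟩, _, ⟨B, hB, rfl⟩, rfl⟩
    have hAsub := ((mem_Patt_left_iff hm (by omega) A).1 hA).1
    have hBsub := (mem_Patt_right_iff (by omega) (by omega) hqk B).1 hB
    have key := theta_union g k m q lam h0 h1 hm (le_of_lt hmq) hAsub hBsub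
    simp only [SetLike.mem_coe]
    rw [← key]
    exact Ideal.subset_span ⟨_, glue_mem hm hmq hqk hA hB, rfl⟩

end CP

open CP
theorem stmt11 (g k : ℤ) (lam : ℤ → ℤ) (hgk : g < k)
    (hdec : ∀ j : ℤ, g ≤ j → j ≤ k → lam (j + 1) ≤ lam j)
    (K : ℕ) (hK : 1 ≤ K) (p q : ℕ → ℤ)
    (hp1 : p 1 = g + 1) (hqK : q K = k)
    (hpq : ∀ κ : ℕ, 1 ≤ κ → κ ≤ K → p κ ≤ q κ)
    (hchain : ∀ κ : ℕ, 1 ≤ κ → κ ≤ K - 1 → q κ + 1 = p (κ + 1))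
    (hconn : ∀ κ : ℕ, 1 ≤ κ → κ ≤ K →
      ∀ j : ℤ, p κ ≤ j → j ≤ q κ - 1 → j ∈ L g k lam 0 ∪ L g k lam 1)
    (hmax : ∀ κ : ℕ, 1 ≤ κ → κ ≤ K - 1 → q κ ∈ Lbar g k lam)
    (Psi : ℕ → Finset (ℤ × ℤ))
    (hPsi : ∀ κ : ℕ, 1 ≤ κ → κ ≤ K →
      Psi κ ∈ Patt g k g (p κ - 1) ∧ ¬ Bulky g k lam g (p κ - 1) (Psi κ) ∧
        theta g k lam (p κ - 1) (Psi κ) ≠ 0)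
    (tfk : ℕ → Ideal ℤ)
    (htfk : ∀ κ : ℕ, 1 ≤ κ → κ ≤ K →
      tfk κ = Ideal.span ((fun Xi =>
        theta g k lam (q κ) (Psi κ ∪ Xi) / theta g k lam (p κ - 1) (Psi κ)) ''
          Patt g k (p κ) (q κ))) :
    Ideal.span ((fun Xi => theta g k lam k Xi) '' Patt g k g k) =
      ∏ κ ∈ Finset.Icc 1 K, tfk κ := by
  have hpge : ∀ n : ℕ, 1 ≤ n → n ≤ K → g + 1 ≤ p n := by
    intro n hn
    induction n, hn using Nat.le_induction with
    | base => intro _; rw [hp1]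
    | succ m hm ih =>
      intro hmK
      have hc := hchain m hm (by omega)
      have h2 := hpq m hm (by omega)
      have h3 := ih (by omega)
      omega
  have hqlek : ∀ d n : ℕ, 1 ≤ n → n + d = K → q n ≤ k := by
    intro d
    induction d with
    | zero =>
      intro n h1 h2
      have h3 : n = K := by omega
      rw [h3, hqK]
    | succ d ih =>
      intro n h1 h2
      have hc := hchain n h1 (by omega)
      have h2' := hpq (n + 1) (by omega) (by omega)
      have h3 := ih (n + 1) (by omega) (by omega)
      omega
  have hqk' : ∀ n : ℕ, 1 ≤ n → n ≤ K → q n ≤ k := fun n h1 h2 => hqlek (K - n) n h1 (by omega)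
  have hLbar : ∀ n : ℕ, 1 ≤ n → n ≤ K - 1 →
      ¬ memL g k lam 0 (q n) ∧ ¬ memL g k lam 1 (q n) := by
    intro n h1 h2
    have hm := hmax n h1 h2
    simp only [Lbar, Set.mem_diff, Set.mem_union, L, Set.mem_setOf_eq] at hm
    exact ⟨fun h => hm.2 (Or.inl h), fun h => hm.2 (Or.inr h)⟩
  have hbound : ∀ n : ℕ, 1 ≤ n → n ≤ K →
      ¬ memL g k lam 0 (p n - 1) ∧ ¬ memL g k lam 1 (p n - 1) := by
    intro n h1 h2
    rcases Nat.lt_or_ge 1 n with h | h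
    · obtain ⟨m, rfl⟩ : ∃ m, n = m + 1 := ⟨n - 1, by omega⟩
      have hc := hchain m (by omega) (by omega)
      have heq : p (m + 1) - 1 = q m := by omega
      rw [heq]
      exact hLbar m (by omega) (by omega)
    · have h3 : n = 1 := by omega
      subst h3
      rw [hp1]
      have heq : g + 1 - 1 = g := by ring
      rw [heq]
      exact ⟨fun hc => absurd hc.1 (by omega), fun hc => absurd hc.1 (by omega)⟩
  have htfk' : ∀ κ : ℕ, 1 ≤ κ → κ ≤ K → tfk κ =
      Ideal.span ((fun Xi => ∏ j ∈ Finset.Ico (p κ - 1) (q κ),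
        w g k lam j (col Xi j) (col Xi (j + 1))) '' Patt g k (p κ) (q κ)) := by
    intro κ h1 h2
    rw [htfk κ h1 h2]
    congr 1
    apply Set.image_congr
    intro Xi hXi
    obtain ⟨hP, -, hne⟩ := hPsi κ h1 h2
    have hpg := hpge κ h1 h2
    have hqk2 := hqk' κ h1 h2
    have hpq2 := hpq κ h1 h2
    have hApsi : Psi κ ⊆ ({1, 2} : Finset ℤ) ×ˢ Finset.Icc g (p κ - 1) :=
      ((mem_Patt_left_iff (by omega) (by omega) (Psi κ)).1 hP).1
    have hBsub : Xi ⊆ ({1, 2} : Finset ℤ) ×ˢ Finset.Icc (p κ) (q κ) :=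
      (mem_Patt_right_iff (by omega) (by omega) (by omega) Xi).1 hXi
    have hBsub' : Xi ⊆ ({1, 2} : Finset ℤ) ×ˢ Finset.Icc ((p κ - 1) + 1) (q κ) := by
      rwa [sub_add_cancel]
    have hb := hbound κ h1 h2
    rw [theta_union g k (p κ - 1) (q κ) lam hb.1 hb.2 (by omega) (by omega) hApsi hBsub',
      Int.mul_ediv_cancel_left _ hne]
  have main : ∀ n : ℕ, 1 ≤ n → n ≤ K →
      Ideal.span ((fun Xi => theta g k lam (q n) Xi) '' Patt g k g (q n)) =
        ∏ κ ∈ Finset.Icc 1 n, tfk κ := by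
    intro n hn
    induction n, hn using Nat.le_induction with
    | base =>
      intro h1K
      have hpq1 := hpq 1 le_rfl h1K
      have hq1k := hqk' 1 le_rfl h1K
      rw [Finset.Icc_self, Finset.prod_singleton, htfk' 1 le_rfl h1K, hp1,
        span_split g k g (q 1) lam le_rfl (by omega) hq1k
          (fun h => absurd h.1 (by omega)) (fun h => absurd h.1 (by omega)),
        Patt_self g k (by omega)]
      have himg : (fun Xi => theta g k lam g Xi) ''
          {(({1, 2} : Finset ℤ) ×ˢ ({g} : Finset ℤ))} = {1} := by
        rw [Set.image_singleton, theta_at_g]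
      rw [himg, Ideal.span_singleton_one, Ideal.top_mul]
      norm_num
    | succ m hm ih =>
      intro hK2
      have hc := hchain m hm (by omega)
      have hqm_ge : g + 1 ≤ q m := by
        have := hpge m hm (by omega); have := hpq m hm (by omega); omega
      have hqq : q m < q (m + 1) := by have := hpq (m + 1) (by omega) hK2; omega
      have hqk2 := hqk' (m + 1) (by omega) hK2
      have hLb := hLbar m hm (by omega)
      rw [Finset.prod_Icc_succ_top (by omega : 1 ≤ m + 1), ← ih (by omega),
        htfk' (m + 1) (by omega) hK2, ← hc]
      have he : q m + 1 - 1 = q m := by omega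
      rw [he, span_split g k (q m) (q (m + 1)) lam (by omega) hqq hqk2 hLb.1 hLb.2]
  have hfin := main K hK le_rfl
  rwa [hqK] at hfin
end
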